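/- arXiv:0810.4015 — 6 statements merged into one kernel-verified Lean document; each statement's English description precedes it below -/
import Mathlib

section
/- Let k be a positive integer and l < k with gcd(l,k)=1. For any a in GF(2^k)*, the polynomial P_a(x) = x^{2^l+1} + x + a has either 0, 1, or 3 zeros in GF(2^k). -/
/-!
Write `q = 2 ^ l`. Since `gcd(l, k) = 1`, the only elements of `GF(2^k)` fixed by `t ↦ t ^ q` are
`0` and `1`; in particular `u ↦ u ^ (q - 1)` is a bijection of `GF(2^k)*`.

Fix a root `x` of `P_a`. The substitution `y = x + 1 / w` turns `P_a(y) = 0`, `y ≠ x`, into the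
equation `L w = 1` for the additive map `L w = (x ^ q + 1) w ^ q + x w`. A nonzero element of the
kernel of `L` is a `(q - 1)`-th root of `x / (x ^ q + 1)`, which exists, and the quotient of two
of them is fixed by `t ↦ t ^ q`; so `ker L` has two elements. Hence `L w = 1` has `0` or `2`
solutions and `P_a` has `1` or `3` roots (or none at all).
-/

open Finset Function

theorem pow_eq_self_of_pow_pow_eq_self {M : Type*} [Monoid M] {n k l : ℕ} (hlk : l.Coprime k)
    {t : M} (hl : t ^ n ^ l = t) (hk : t ^ n ^ k = t) : t ^ n = t := by
  have h : IsPeriodicPt (· ^ n) (l.gcd k) t :=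
    IsPeriodicPt.gcd (by simpa [IsPeriodicPt, IsFixedPt, pow_iterate])
      (by simpa [IsPeriodicPt, IsFixedPt, pow_iterate])
  simpa [hlk.gcd_eq_one, IsPeriodicPt, IsFixedPt] using h

theorem exists_pow_eq_mul_self {G : Type*} [CommGroup G] [Finite G] {q : ℕ}
    (hfix : ∀ g : G, g ^ q = g → g = 1) (c : G) : ∃ g : G, g ^ q = c * g := by
  have hinj : Injective fun g : G => g ^ q * g⁻¹ := by
    intro u v (huv : u ^ q * u⁻¹ = v ^ q * v⁻¹)
    refine div_eq_one.1 (hfix _ ?_)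
    rw [div_pow, div_eq_div_iff_mul_eq_mul]
    calc u ^ q * v = u ^ q * u⁻¹ * (u * v) := by rw [mul_assoc, inv_mul_cancel_left]
      _ = v ^ q * v⁻¹ * (v * u) := by rw [huv, mul_comm u]
      _ = u * v ^ q := by rw [mul_assoc, inv_mul_cancel_left, mul_comm]
  obtain ⟨g, hg⟩ := Finite.surjective_of_injective hinj c
  exact ⟨g, by rw [← hg, inv_mul_cancel_right]⟩

namespace FiniteField

variable {F : Type*} [Field F] [Fintype F] {k l : ℕ}

theorem eq_zero_or_eq_one_of_pow_two_pow_eq_self (hF : Fintype.card F = 2 ^ k)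
    (hlk : l.Coprime k) {t : F} (ht : t ^ 2 ^ l = t) : t = 0 ∨ t = 1 := by
  have h2 : t ^ 2 = t := pow_eq_self_of_pow_pow_eq_self hlk ht (hF ▸ pow_card t)
  exact IsIdempotentElem.iff_eq_zero_or_one.1 (by rwa [IsIdempotentElem, ← sq])

theorem exists_ne_zero_pow_two_pow_eq_mul_self (hF : Fintype.card F = 2 ^ k)
    (hlk : l.Coprime k) {c : F} (hc : c ≠ 0) : ∃ w : F, w ≠ 0 ∧ w ^ 2 ^ l = c * w := by
  have hfix (g : Fˣ) (hg : g ^ 2 ^ l = g) : g = 1 := Units.ext <|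
    (eq_zero_or_eq_one_of_pow_two_pow_eq_self hF hlk
      (by exact_mod_cast congrArg Units.val hg)).resolve_left g.ne_zero
  obtain ⟨u, hu⟩ := exists_pow_eq_mul_self hfix (Units.mk0 c hc)
  exact ⟨u, u.ne_zero, by simpa using congrArg Units.val hu⟩

end FiniteField

theorem ne_zero_of_root {R : Type*} [Semiring R] {l : ℕ} {a x : R} (ha : a ≠ 0)
    (hx : x ^ (2 ^ l + 1) + x + a = 0) : x ≠ 0 := by
  rintro rfl
  simp_all

section CharTwo

variable {F : Type*} [Field F] [CharP F 2] {l : ℕ}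

variable (l) in
def linearizedHom (b c : F) : F →+ F :=
  (AddMonoidHom.mulLeft b).comp (iterateFrobenius F 2 l : F →+* F).toAddMonoidHom +
    AddMonoidHom.mulLeft c

theorem linearizedHom_apply (b c w : F) : linearizedHom l b c w = b * w ^ 2 ^ l + c * w := rfl

theorem add_inv_root_iff_linearizedHom_eq_one {a x : F} (hx : x ^ (2 ^ l + 1) + x + a = 0)
    {w : F} (hw : w ≠ 0) :
    (x + w⁻¹) ^ (2 ^ l + 1) + (x + w⁻¹) + a = 0 ↔ linearizedHom l (x ^ 2 ^ l + 1) x w = 1 := by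
  have hinv : w * w⁻¹ = 1 := mul_inv_cancel₀ hw
  have hinvq : w ^ 2 ^ l * w⁻¹ ^ 2 ^ l = 1 := by rw [← mul_pow, hinv, one_pow]
  have hmain : ((x + w⁻¹) ^ (2 ^ l + 1) + (x + w⁻¹) + a) * (w ^ 2 ^ l * w) =
      linearizedHom l (x ^ 2 ^ l + 1) x w + 1 := by
    rw [linearizedHom_apply, pow_succ, add_pow_char_pow]
    linear_combination (w ^ 2 ^ l * w) * hx + x * w * hinvq + hinvq +
      (x ^ 2 ^ l * w ^ 2 ^ l + w⁻¹ ^ 2 ^ l * w ^ 2 ^ l + w ^ 2 ^ l) * hinv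
  rw [← mul_left_inj' (by positivity : w ^ 2 ^ l * w ≠ 0), zero_mul, hmain, CharTwo.add_eq_zero]

theorem pow_two_pow_add_one_ne_zero_of_root {a x : F} (ha : a ≠ 0)
    (hx : x ^ (2 ^ l + 1) + x + a = 0) : x ^ 2 ^ l + 1 ≠ 0 := by
  intro h
  rw [pow_succ, CharTwo.add_eq_zero.1 h, one_mul, CharTwo.add_self_eq_zero, zero_add] at hx
  exact ha hx

variable [Fintype F] [DecidableEq F]

theorem card_roots_eq_card_fiber_linearizedHom_add_one {a x : F}
    (hx : x ^ (2 ^ l + 1) + x + a = 0) :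
    #{y | y ^ (2 ^ l + 1) + y + a = 0} = #{w | linearizedHom l (x ^ 2 ^ l + 1) x w = 1} + 1 := by
  rw [← card_erase_add_one (mem_filter.2 ⟨mem_univ x, hx⟩)]
  congr 1
  have hne_zero {w : F} (hw : linearizedHom l (x ^ 2 ^ l + 1) x w = 1) : w ≠ 0 := by
    rintro rfl
    simp at hw
  refine card_nbij' (fun y => (x + y)⁻¹) (fun w => x + w⁻¹) ?_ ?_ ?_ ?_
  · intro y hy
    simp only [coe_erase, coe_filter, mem_univ, true_and, Set.mem_sdiff, Set.mem_ofPred_eq,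
      Set.mem_singleton_iff] at hy ⊢
    have hxy : x + y ≠ 0 := fun h => hy.2 (CharTwo.add_eq_zero.1 h).symm
    rw [← add_inv_root_iff_linearizedHom_eq_one hx (inv_ne_zero hxy), inv_inv,
      CharTwo.add_cancel_left]
    exact hy.1
  · intro w hw
    simp only [coe_erase, coe_filter, mem_univ, true_and, Set.mem_sdiff, Set.mem_ofPred_eq,
      Set.mem_singleton_iff] at hw ⊢
    refine ⟨(add_inv_root_iff_linearizedHom_eq_one hx (hne_zero hw)).2 hw, ?_⟩
    simpa using hne_zero hw
  · intro y _
    simp only [inv_inv, CharTwo.add_cancel_left]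
  · intro w _
    simp only [CharTwo.add_cancel_left, inv_inv]

variable {k : ℕ}

theorem card_ker_linearizedHom (hF : Fintype.card F = 2 ^ k) (hlk : l.Coprime k) {b c : F}
    (hb : b ≠ 0) (hc : c ≠ 0) : #{w | linearizedHom l b c w = 0} = 2 := by
  obtain ⟨w₀, hw₀, hw₀q⟩ :=
    FiniteField.exists_ne_zero_pow_two_pow_eq_mul_self hF hlk (div_ne_zero hc hb)
  suffices h : ({w | linearizedHom l b c w = 0} : Finset F) = {0, w₀} by
    rw [h, card_pair hw₀.symm]
  ext w
  simp only [mem_filter, mem_univ, true_and, mem_insert, mem_singleton, linearizedHom_apply,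
    CharTwo.add_eq_zero]
  constructor
  · intro hw
    refine or_iff_not_imp_left.2 fun hw0 => ?_
    have hfix : (w / w₀) ^ 2 ^ l = w / w₀ := by
      have hwq : w ^ 2 ^ l = c / b * w := by
        field_simp
        linear_combination hw
      rw [div_pow, hwq, hw₀q]
      field_simp
    rcases FiniteField.eq_zero_or_eq_one_of_pow_two_pow_eq_self hF hlk hfix with h | h
    · exact absurd h (div_ne_zero hw0 hw₀)
    · exact (div_eq_one_iff_eq hw₀).1 h
  · rintro (rfl | rfl)
    · simp
    · rw [hw₀q]
      field_simp

theorem card_fiber_linearizedHom_eq_zero_or_two (hF : Fintype.card F = 2 ^ k)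
    (hlk : l.Coprime k) {b c : F} (hb : b ≠ 0) (hc : c ≠ 0) (y : F) :
    #{w | linearizedHom l b c w = y} = 0 ∨ #{w | linearizedHom l b c w = y} = 2 := by
  by_cases hy : y ∈ Set.range (linearizedHom l b c)
  · right
    rw [AddMonoidHom.card_fiber_eq_of_mem_range _ hy ⟨0, map_zero _⟩,
      card_ker_linearizedHom hF hlk hb hc]
  · left
    rw [card_eq_zero, filter_eq_empty_iff]
    exact fun w _ hw => hy ⟨w, hw⟩

end CharTwo

theorem stmt_0_general (k l : ℕ) (hgcd : Nat.gcd l k = 1)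
    (F : Type*) [Field F] [Fintype F] [DecidableEq F] (hF : Fintype.card F = 2 ^ k)
    (a : F) (ha : a ≠ 0) :
    (Finset.univ.filter (fun x : F => x ^ (2 ^ l + 1) + x + a = 0)).card ∈
      ({0, 1, 3} : Set ℕ) := by
  have : CharP F 2 := charP_of_card_eq_prime_pow hF
  obtain hS | ⟨x, hx⟩ :=
    (univ.filter fun x : F => x ^ (2 ^ l + 1) + x + a = 0).eq_empty_or_nonempty
  · simp [hS]
  replace hx := (mem_filter.1 hx).2
  rw [card_roots_eq_card_fiber_linearizedHom_add_one hx]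
  obtain h | h := card_fiber_linearizedHom_eq_zero_or_two hF hgcd
    (pow_two_pow_add_one_ne_zero_of_root ha hx) (ne_zero_of_root ha hx) 1
  all_goals simp [h]

/-- For `gcd(l,k)=1`, `P_a(x) = x^(2^l+1) + x + a` has 0, 1, or 3 zeros in `GF(2^k)`. -/
theorem stmt_0 (k l : ℕ) (hk : 0 < k) (hlk : l < k) (hgcd : Nat.gcd l k = 1)
    (F : Type*) [Field F] [Fintype F] [DecidableEq F] (hF : Fintype.card F = 2 ^ k)
    (a : F) (ha : a ≠ 0) :
    (Finset.univ.filter (fun x : F => x ^ (2 ^ l + 1) + x + a = 0)).card ∈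
      ({0, 1, 3} : Set ℕ) :=
  stmt_0_general k l hgcd F hF a ha
end

section
/- Let k be a positive integer, l < k with gcd(l,k)=1, and a in GF(2^k)*. Suppose x_0 in GF(2^k) satisfies x_0^{2^l+1} + x_0 = a (so P_a(x_0)=0). Then P_a(x) has exactly one zero in GF(2^k) if and only if Tr_k((1+x_0^{-1})^{e(l')}) = 1, where l' = l^{-1} mod k, e(l') = 1 + 2^l + 2^{2l} + ... + 2^{(l'-1)l}, and Tr_k is the absolute trace of GF(2^k). -/
/-!
Put `t = 1 + x0⁻¹` and `w = t ^ e(l')`. Since `e(l') 2^l + 1 = e(l') + 2^(l l')` and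
`l l' ≡ 1 (mod k)`, we get `w ^ 2^l = t w`. For `v ≠ 0` the point `x0 + (x0 + 1) w / v` is a zero
of `P_a` exactly when `v ^ 2^l + v = t w = w ^ 2^l`, so `P_a` has a second zero iff `w ^ 2^l` lies
in the image of the additive map `v ↦ v ^ 2^l + v`. Its kernel is `𝔽₂` (again because `l` is
invertible mod `k`), so its image has `2^(k-1)` elements; the image lies in the kernel of the
trace, which, as the zero set of a polynomial of degree `2^(k-1)`, is no larger. Hence the image
is the kernel of the trace, and `Tr(w ^ 2^l) = Tr(w)`.
-/

open Finset Polynomial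

theorem Finset.card_eq_one_iff_forall_eq_of_mem {α : Type*} {s : Finset α} {a : α} (ha : a ∈ s) :
    #s = 1 ↔ ∀ x ∈ s, x = a := by
  rw [card_eq_one_iff_existsUnique]
  exact ⟨fun ⟨_, _, h⟩ x hx => (h x hx).trans (h a ha).symm, fun h => ⟨a, ha, h⟩⟩

theorem pow_pow_mul_eq_self {M : Type*} [Monoid M] {p l : ℕ} {v : M} (h : v ^ p ^ l = v)
    (m : ℕ) : v ^ p ^ (l * m) = v := by
  induction m with
  | zero => simp
  | succ m ih => rw [Nat.mul_succ, pow_add, pow_mul, ih, h]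

section FiniteField

variable {F : Type*} [Field F]

section Frobenius

variable [Fintype F] {p k : ℕ}

theorem pow_pow_mod (hF : Fintype.card F = p ^ k) (x : F) (m : ℕ) :
    x ^ p ^ m = x ^ p ^ (m % k) := by
  conv_lhs => rw [← Nat.mod_add_div m k, pow_add, mul_comm, pow_mul, pow_mul, ← hF,
    FiniteField.pow_card_pow]

theorem pow_pow_eq_of_modEq (hF : Fintype.card F = p ^ k) (x : F) {m n : ℕ}
    (h : m ≡ n [MOD k]) : x ^ p ^ m = x ^ p ^ n := by
  rw [pow_pow_mod hF x m, pow_pow_mod hF x n, h]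

end Frobenius

section Trace

variable [CharP F 2]

noncomputable def absTrace (k : ℕ) : F →+ F :=
  ∑ i ∈ range k, (iterateFrobenius F 2 i).toAddMonoidHom

theorem absTrace_apply (k : ℕ) (x : F) : absTrace k x = ∑ i ∈ range k, x ^ 2 ^ i := by
  simp [absTrace, iterateFrobenius_def]

variable [Fintype F] {k : ℕ}

theorem absTrace_sq (hF : Fintype.card F = 2 ^ k) (x : F) : absTrace k (x ^ 2) = absTrace k x := by
  have hxk : x ^ 2 ^ k = x := by rw [← hF, FiniteField.pow_card]
  have hrot := (sum_range_succ' (fun i => x ^ 2 ^ i) k).symm.trans (sum_range_succ _ k)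
  simp only [pow_zero, pow_one, hxk] at hrot
  simp only [absTrace_apply, ← pow_mul, ← pow_succ']
  exact add_right_cancel hrot

theorem absTrace_pow_two_pow (hF : Fintype.card F = 2 ^ k) (x : F) (n : ℕ) :
    absTrace k (x ^ 2 ^ n) = absTrace k x := by
  induction n with
  | zero => rw [pow_zero, pow_one]
  | succ n ih => rw [pow_succ, pow_mul, absTrace_sq hF, ih]

theorem absTrace_eq_zero_or_one (hF : Fintype.card F = 2 ^ k) (x : F) :
    absTrace k x = 0 ∨ absTrace k x = 1 := by
  have hsq : absTrace k x ^ 2 = absTrace k (x ^ 2) := by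
    simp only [absTrace_apply, CharTwo.sum_sq, ← pow_mul, mul_comm]
  rw [← IsIdempotentElem.iff_eq_zero_or_one, IsIdempotentElem, ← sq, hsq, absTrace_sq hF]

theorem card_ker_absTrace_le (hF : Fintype.card F = 2 ^ k) :
    Nat.card (absTrace (F := F) k).ker ≤ 2 ^ (k - 1) := by
  classical
  have hk : k ≠ 0 := by
    rintro rfl
    exact Fintype.one_lt_card.ne' (by simpa using hF)
  set p : F[X] := ∑ i ∈ range k, X ^ 2 ^ i
  have hp : p ≠ 0 := by
    intro h
    have hcoeff := congrArg (coeff · 1) h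
    simp only [p, finsetSum_coeff, coeff_X_pow, coeff_zero] at hcoeff
    rw [sum_eq_single 0 (fun i _ hi => if_neg (Nat.one_lt_two_pow hi).ne)
      (fun h => (h (mem_range.2 (Nat.pos_of_ne_zero hk))).elim)] at hcoeff
    simp at hcoeff
  have hdeg : p.natDegree ≤ 2 ^ (k - 1) := by
    refine natDegree_sum_le_of_forall_le _ _ fun i hi => ?_
    rw [natDegree_X_pow]
    exact Nat.pow_le_pow_right two_pos (by have := mem_range.1 hi; omega)
  calc Nat.card (absTrace (F := F) k).ker
      = #(univ.filter fun x : F => absTrace k x = 0) := by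
        rw [Nat.card_eq_fintype_card, Fintype.card_subtype]; simp only [AddMonoidHom.mem_ker]
    _ ≤ p.natDegree := card_le_degree_of_subset_roots fun x hx => by
        rw [mem_roots hp, IsRoot, eval_finsetSum]
        simpa [absTrace_apply] using (mem_filter.1 hx).2
    _ ≤ 2 ^ (k - 1) := hdeg

end Trace

section ArtinSchreier

variable [CharP F 2]

noncomputable def artinSchreier (l : ℕ) : F →+ F :=
  (iterateFrobenius F 2 l).toAddMonoidHom + AddMonoidHom.id F

theorem artinSchreier_apply (l : ℕ) (v : F) : artinSchreier l v = v ^ 2 ^ l + v := by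
  simp [artinSchreier, iterateFrobenius_def]

variable [Fintype F] {k l l' : ℕ}

theorem mem_ker_artinSchreier (hF : Fintype.card F = 2 ^ k) (hl : l * l' ≡ 1 [MOD k]) {v : F} :
    v ∈ (artinSchreier l).ker ↔ v = 0 ∨ v = 1 := by
  rw [AddMonoidHom.mem_ker, artinSchreier_apply, CharTwo.add_eq_zero,
    ← IsIdempotentElem.iff_eq_zero_or_one, IsIdempotentElem, ← sq]
  constructor
  · intro h
    simpa [pow_pow_mul_eq_self h l'] using (pow_pow_eq_of_modEq hF v hl).symm
  · intro h
    simpa using pow_pow_mul_eq_self (l := 1) (by simpa using h) l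

theorem card_ker_artinSchreier (hF : Fintype.card F = 2 ^ k) (hl : l * l' ≡ 1 [MOD k]) :
    Nat.card (artinSchreier (F := F) l).ker = 2 := by
  have hker : ((artinSchreier (F := F) l).ker : Set F) = {0, 1} := by
    ext v
    exact mem_ker_artinSchreier hF hl
  rw [← SetLike.coe_sort_coe, Nat.card_coe_set_eq, hker, Set.ncard_pair zero_ne_one]

theorem range_artinSchreier_le_ker_absTrace (hF : Fintype.card F = 2 ^ k) (l : ℕ) :
    (artinSchreier (F := F) l).range ≤ (absTrace k).ker := by
  rintro _ ⟨v, rfl⟩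
  rw [AddMonoidHom.mem_ker, artinSchreier_apply, map_add, absTrace_pow_two_pow hF,
    CharTwo.add_self_eq_zero]

theorem range_artinSchreier_eq_ker_absTrace (hF : Fintype.card F = 2 ^ k)
    (hl : l * l' ≡ 1 [MOD k]) : (artinSchreier (F := F) l).range = (absTrace k).ker := by
  refine AddSubgroup.eq_of_le_of_card_ge (range_artinSchreier_le_ker_absTrace hF l) ?_
  have hcard := (artinSchreier (F := F) l).ker.card_mul_index
  rw [AddSubgroup.index_ker, card_ker_artinSchreier hF hl, Nat.card_eq_fintype_card (α := F), hF]
    at hcard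
  have hk : k ≠ 0 := by rintro rfl; omega
  refine (card_ker_absTrace_le hF).trans ?_
  rw [← Nat.sub_one_add_one hk, pow_succ] at hcard
  omega

theorem exists_pow_two_pow_add_self_eq_iff (hF : Fintype.card F = 2 ^ k)
    (hl : l * l' ≡ 1 [MOD k]) (b : F) :
    (∃ v : F, v ^ 2 ^ l + v = b) ↔ absTrace k b = 0 := by
  simpa [artinSchreier_apply] using SetLike.ext_iff.mp (range_artinSchreier_eq_ker_absTrace hF hl) b

end ArtinSchreier

theorem pow_geomSum_pow_two_pow [Fintype F] {k l l' : ℕ} (hF : Fintype.card F = 2 ^ k)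
    (hl : l * l' ≡ 1 [MOD k]) {t : F} (ht : t ≠ 0) :
    (t ^ ∑ j ∈ range l', 2 ^ (j * l)) ^ 2 ^ l = t * t ^ ∑ j ∈ range l', 2 ^ (j * l) := by
  set e := ∑ j ∈ range l', 2 ^ (j * l)
  have he : e * 2 ^ l + 1 = e + 2 ^ (l * l') := by
    simp only [e, pow_mul', pow_mul 2 l l']
    rw [mul_comm, ← geom_sum_succ, geom_sum_succ', add_comm]
  apply mul_left_cancel₀ ht
  calc t * (t ^ e) ^ 2 ^ l = t ^ (e * 2 ^ l + 1) := by rw [pow_succ, pow_mul, mul_comm]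
    _ = t ^ e * t ^ 2 := by rw [he, pow_add, pow_pow_eq_of_modEq hF t hl, pow_one]
    _ = t * (t * t ^ e) := by ring

theorem one_add_inv_ne_zero {x : F} (hx : x ≠ 0) (hx1 : x + 1 ≠ 0) : 1 + x⁻¹ ≠ 0 := by
  rw [inv_eq_one_div, one_add_div hx]
  exact div_ne_zero hx1 hx

section RootsOfP

variable [CharP F 2] {l : ℕ} {a x0 : F}

theorem eval_root_add (hx0 : x0 ^ (2 ^ l + 1) + x0 = a) (y : F) :
    (x0 + y) ^ (2 ^ l + 1) + (x0 + y) + a = y ^ 2 ^ l * (y + x0) + (x0 + 1) ^ 2 ^ l * y := by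
  rw [pow_succ, add_pow_char_pow, add_pow_char_pow, one_pow]
  linear_combination hx0 + a * CharTwo.two_eq_zero (R := F)

theorem eval_root_add_eq_zero_iff (hx0 : x0 ^ (2 ^ l + 1) + x0 = a) (hx0ne : x0 ≠ 0)
    (hx1 : x0 + 1 ≠ 0) {w : F} (hw0 : w ≠ 0) (hw : w ^ 2 ^ l = (1 + x0⁻¹) * w) {v y : F}
    (hv : v ≠ 0) (hyv : y * v = (x0 + 1) * w) :
    (x0 + y) ^ (2 ^ l + 1) + (x0 + y) + a = 0 ↔ v ^ 2 ^ l + v = (1 + x0⁻¹) * w := by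
  have hx0t : x0 * (1 + x0⁻¹) = x0 + 1 := by field_simp
  have hw' : x0 * w ^ 2 ^ l = (x0 + 1) * w := by rw [hw, ← mul_assoc, hx0t]
  have hyv' : y ^ 2 ^ l * v ^ 2 ^ l = (x0 + 1) ^ 2 ^ l * w ^ 2 ^ l := by
    rw [← mul_pow, ← mul_pow, hyv]
  have key : v ^ 2 ^ l * v * x0 * ((x0 + y) ^ (2 ^ l + 1) + (x0 + y) + a) =
      (x0 + 1) ^ 2 ^ l * (x0 + 1) * w * x0 * (v ^ 2 ^ l + v + (1 + x0⁻¹) * w) := by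
    rw [eval_root_add hx0]
    linear_combination x0 * v * (y + x0) * hyv' + (x0 + 1) ^ 2 ^ l * v * (y + x0) * hw'
      + ((x0 + 1) ^ 2 ^ l * (x0 + 1) * w + x0 * (x0 + 1) ^ 2 ^ l * v ^ 2 ^ l) * hyv
      - (x0 + 1) ^ 2 ^ l * (x0 + 1) * w * w * hx0t
  rw [← mul_eq_zero_iff_left (by positivity : v ^ 2 ^ l * v * x0 ≠ 0), key,
    mul_eq_zero_iff_left (by positivity), CharTwo.add_eq_zero]

theorem exists_root_ne_iff (hx0 : x0 ^ (2 ^ l + 1) + x0 = a) (hx0ne : x0 ≠ 0) (hx1 : x0 + 1 ≠ 0)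
    {w : F} (hw0 : w ≠ 0) (hw : w ^ 2 ^ l = (1 + x0⁻¹) * w) :
    (∃ x, x ^ (2 ^ l + 1) + x + a = 0 ∧ x ≠ x0) ↔ ∃ v, v ^ 2 ^ l + v = (1 + x0⁻¹) * w := by
  have hnum : (x0 + 1) * w ≠ 0 := mul_ne_zero hx1 hw0
  constructor
  · rintro ⟨x, hx, hne⟩
    have hy : x + x0 ≠ 0 := fun h => hne (CharTwo.add_eq_zero.mp h)
    refine ⟨(x0 + 1) * w / (x + x0), (eval_root_add_eq_zero_iff hx0 hx0ne hx1 hw0 hw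
      (div_ne_zero hnum hy) (mul_div_cancel₀ _ hy)).mp ?_⟩
    rwa [add_comm x, CharTwo.add_cancel_left]
  · rintro ⟨v, hv⟩
    have hv0 : v ≠ 0 := by
      rintro rfl
      refine mul_ne_zero (one_add_inv_ne_zero hx0ne hx1) hw0 ?_
      rw [← hv, zero_pow (by positivity), add_zero]
    refine ⟨x0 + (x0 + 1) * w / v, (eval_root_add_eq_zero_iff hx0 hx0ne hx1 hw0 hw hv0
      (div_mul_cancel₀ _ hv0)).mpr hv, ?_⟩
    simpa using div_ne_zero hnum hv0

end RootsOfP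

end FiniteField

theorem stmt_1_general (k l l' : ℕ)
    (hl' : l * l' ≡ 1 [MOD k])
    (F : Type*) [Field F] [Fintype F] [DecidableEq F] (hF : Fintype.card F = 2 ^ k)
    (a : F) (ha : a ≠ 0) (x0 : F) (hx0 : x0 ^ (2 ^ l + 1) + x0 = a) :
    (Finset.univ.filter (fun x : F => x ^ (2 ^ l + 1) + x + a = 0)).card = 1 ↔
      ∑ i ∈ Finset.range k,
        ((1 + x0⁻¹) ^ (∑ j ∈ Finset.range l', 2 ^ (j * l))) ^ (2 ^ i) = 1 := by
  have : CharP F 2 := charP_of_card_eq_prime_pow hF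
  have hx0ne : x0 ≠ 0 := by
    rintro rfl
    simp [eq_comm, ha] at hx0
  have hx1 : x0 + 1 ≠ 0 := by
    intro h
    rw [CharTwo.add_eq_zero.mp h, one_pow, CharTwo.add_self_eq_zero] at hx0
    exact ha hx0.symm
  have ht : 1 + x0⁻¹ ≠ 0 := one_add_inv_ne_zero hx0ne hx1
  set w := (1 + x0⁻¹) ^ ∑ j ∈ range l', 2 ^ (j * l)
  have hw : w ^ 2 ^ l = (1 + x0⁻¹) * w := pow_geomSum_pow_two_pow hF hl' ht
  have hx0_mem : x0 ∈ univ.filter (fun x : F => x ^ (2 ^ l + 1) + x + a = 0) := by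
    simp [hx0, CharTwo.add_self_eq_zero]
  rw [← absTrace_apply, card_eq_one_iff_forall_eq_of_mem hx0_mem, ← not_iff_not]
  push Not
  simp only [mem_filter, mem_univ, true_and]
  rw [exists_root_ne_iff hx0 hx0ne hx1 (pow_ne_zero _ ht) hw,
    exists_pow_two_pow_add_self_eq_iff hF hl', ← hw, absTrace_pow_two_pow hF]
  rcases absTrace_eq_zero_or_one hF w with h | h <;> simp [h]

/-- criterion for `P_a` having exactly one zero in terms of
`Tr_k((1+x0⁻¹)^(e(l')))` where `x0` is a zero of `P_a`. -/
theorem stmt_1 (k l l' : ℕ) (hk : 0 < k) (hlk : l < k) (hgcd : Nat.gcd l k = 1)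
    (hl' : l * l' ≡ 1 [MOD k])
    (F : Type*) [Field F] [Fintype F] [DecidableEq F] (hF : Fintype.card F = 2 ^ k)
    (a : F) (ha : a ≠ 0) (x0 : F) (hx0 : x0 ^ (2 ^ l + 1) + x0 = a) :
    (Finset.univ.filter (fun x : F => x ^ (2 ^ l + 1) + x + a = 0)).card = 1 ↔
      ∑ i ∈ Finset.range k,
        ((1 + x0⁻¹) ^ (∑ j ∈ Finset.range l', 2 ^ (j * l))) ^ (2 ^ i) = 1 :=
  stmt_1_general k l l' hl' F hF a ha x0 hx0
end

section
/- Let k be odd and l < k with gcd(l,k)=1. Let M_0, M_1, M_3 denote the number of a in GF(2^k)* for which P_a(x) = x^{2^l+1}+x+a has exactly 0, 1, 3 zeros in GF(2^k) respectively. Then M_0 = (2^k+1)/3, M_1 = 2^{k-1}-1, and M_3 = (2^{k-1}-1)/3. -/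
/-!
Write `q = 2 ^ l`, `f x = x ^ (q + 1) + x` and `n a = #f⁻¹(a)`, so that `M_i` counts the `a ≠ 0`
with `n a = i`. Three facts determine `M_0, M_1, M_3`.
* `n 0 = 2` and `n a ∈ {0, 1, 3}` for `a ≠ 0`: if `f x = a`, the other roots are the `x + 1/t`
  with `(x^q + 1) t^q + x t = 1`. This equation is affine in `t`, and its linear part has kernel
  `{0, t₀}` since `t ↦ t^(q-1)` is injective, as `gcd(2^l - 1, 2^k - 1) = 2^gcd(l,k) - 1 = 1`.
* `∑ n a = 2^k`.
* `∑ n a ^ 2 = 2 · 2^k`: for `x ≠ y` put `r = 1/(y - x)` and `u = x r`; then `f x = f y` iff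
  `r^q = u^q + u + 1`, which has exactly one solution `r ≠ 0` for each `u` because
  `u^q + u ≠ 1` when `k` is odd. So the pairs `x ≠ y` with `f x = f y` correspond to the `u ∈ F`.
The linear system `M_0 + M_1 + M_3 = 2^k - 1`, `M_1 + 3 M_3 = 2^k - 2`,
`M_1 + 9 M_3 = 2^(k+1) - 4` then has the claimed solution.
-/

open Finset

theorem Finset.sum_comp_eq_sum_card_smul {ι M : Type*} [AddCommMonoid M] {s : Finset ι}
    {t : Finset ℕ} {n : ι → ℕ} (h : ∀ a ∈ s, n a ∈ t) (g : ℕ → M) :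
    ∑ a ∈ s, g (n a) = ∑ i ∈ t, #{a ∈ s | n a = i} • g i := by
  rw [← sum_fiberwise_of_maps_to' h]
  simp only [sum_const]

theorem Fintype.sum_card_fiber_sq {α β : Type*} [Fintype α] [Fintype β] [DecidableEq β]
    (g : α → β) : ∑ b, #{a | g a = b} ^ 2 = #{p : α × α | g p.1 = g p.2} := by
  rw [card_eq_sum_card_fiberwise (f := fun p => g p.1) (t := univ) fun _ _ => mem_univ _]
  refine Finset.sum_congr rfl fun b _ => ?_
  rw [sq, ← card_product]
  congr 1
  ext ⟨x, y⟩
  simp only [mem_product, mem_filter, mem_univ, true_and]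
  constructor
  · rintro ⟨hx, hy⟩; exact ⟨hx.trans hy.symm, hx⟩
  · rintro ⟨hxy, hx⟩; exact ⟨hx, hxy.symm.trans hx⟩

theorem FiniteField.pow_injective_of_coprime {K : Type*} [Field K] [Fintype K] {n : ℕ}
    (hn : n ≠ 0) (hcop : n.Coprime (Fintype.card K - 1)) :
    Function.Injective fun x : K => x ^ n := by
  intro x y hxy
  simp only at hxy
  rcases eq_or_ne y 0 with rfl | hy
  · rwa [zero_pow hn, pow_eq_zero_iff hn] at hxy
  have hx : x ≠ 0 := by
    rintro rfl
    rw [zero_pow hn, eq_comm, pow_eq_zero_iff hn] at hxy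
    exact hy hxy
  have h1 : (x / y) ^ n = 1 := by rw [div_pow, hxy, div_self (pow_ne_zero _ hy)]
  have h2 : (x / y) ^ (Fintype.card K - 1) = 1 :=
    FiniteField.pow_card_sub_one_eq_one _ (div_ne_zero hx hy)
  have := pow_gcd_eq_one.2 ⟨h1, h2⟩
  rwa [hcop, pow_one, div_eq_one_iff_eq hy] at this

theorem FiniteField.pow_prime_pow_ne_add_one {K : Type*} [Field K] [Fintype K] {p k : ℕ}
    [Fact p.Prime] [CharP K p] (hK : Fintype.card K = p ^ k) (hk : ¬p ∣ k) (l : ℕ) (x : K) :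
    x ^ p ^ l ≠ x + 1 := by
  intro h
  have hiter : ∀ m : ℕ, x ^ (p ^ l) ^ m = x + m := by
    intro m
    induction m with
    | zero => simp
    | succ m ih =>
      rw [pow_succ, pow_mul, ih, add_pow_char_pow, h, ← iterateFrobenius_def, map_natCast]
      push_cast
      ring
  have hk' := hiter k
  rw [← pow_mul, mul_comm, pow_mul, ← hK, FiniteField.pow_card_pow, left_eq_add] at hk'
  exact hk ((CharP.cast_eq_zero_iff K p k).1 hk')

theorem card_filter_mul_pow_two_pow_add_mul_eq {K : Type*} [Field K] [Fintype K] [DecidableEq K]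
    [CharP K 2] {l : ℕ} (hl : l ≠ 0) (hinj : Function.Injective fun t : K => t ^ (2 ^ l - 1))
    {c d : K} (hc : c ≠ 0) (hd : d ≠ 0) (b : K) :
    #{t | c * t ^ 2 ^ l + d * t = b} = 0 ∨ #{t | c * t ^ 2 ^ l + d * t = b} = 2 := by
  obtain ⟨t₀, ht₀⟩ : ∃ t₀ : K, t₀ ^ (2 ^ l - 1) = d / c :=
    Finite.injective_iff_surjective.1 hinj (d / c)
  have ht₀0 : t₀ ≠ 0 := by
    rintro rfl
    rw [zero_pow (Nat.sub_ne_zero_of_lt (Nat.one_lt_two_pow hl))] at ht₀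
    exact div_ne_zero hd hc ht₀.symm
  have hker : ∀ w : K, c * w ^ 2 ^ l + d * w = 0 ↔ w = 0 ∨ w = t₀ := by
    intro w
    have hsplit : c * w ^ 2 ^ l + d * w = (c * w ^ (2 ^ l - 1) + d) * w := by
      rw [add_mul, mul_assoc, ← pow_succ, Nat.sub_add_cancel Nat.one_le_two_pow]
    rw [hsplit, mul_eq_zero, or_comm, CharTwo.add_eq_zero, mul_comm c, ← eq_div_iff hc, ← ht₀,
      hinj.eq_iff]
  rcases (univ.filter fun t => c * t ^ 2 ^ l + d * t = b).eq_empty_or_nonempty with h | ⟨t₁, ht₁⟩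
  · exact Or.inl (by rw [h, card_empty])
  right
  rw [mem_filter] at ht₁
  have hsol : (univ.filter fun t => c * t ^ 2 ^ l + d * t = b) = {t₁, t₁ + t₀} := by
    ext t
    have hshift : c * t ^ 2 ^ l + d * t = b ↔ c * (t - t₁) ^ 2 ^ l + d * (t - t₁) = 0 := by
      rw [sub_pow_char_pow, ← ht₁.2]
      constructor <;> intro h <;> linear_combination h
    simp only [mem_filter, mem_univ, true_and, mem_insert, mem_singleton, hshift, hker,
      sub_eq_iff_eq_add', add_zero]
  rw [hsol, card_pair (by simpa using ht₀0)]

theorem pow_char_pow_eq_one_iff {R : Type*} [CommRing R] [IsReduced R] {p : ℕ} [ExpChar R p]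
    (n : ℕ) {x : R} : x ^ p ^ n = 1 ↔ x = 1 := by
  simpa [iterateFrobenius_def] using (iterateFrobenius_inj R p n).eq_iff (a := x) (b := 1)

def trinomialMap {F : Type*} [Field F] (l : ℕ) (x : F) : F := x ^ (2 ^ l + 1) + x

def rootCount {F : Type*} [Field F] [Fintype F] [DecidableEq F] (l : ℕ) (a : F) : ℕ :=
  #{x | trinomialMap l x = a}

theorem sum_rootCount {F : Type*} [Field F] [Fintype F] [DecidableEq F] (l : ℕ) :
    ∑ a : F, rootCount l a = Fintype.card F :=
  (card_eq_sum_card_fiberwise fun _ _ => mem_univ _).symm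

section CharTwo

variable {F : Type*} [Field F] [CharP F 2]

theorem trinomialMap_add_inv_eq_iff (l : ℕ) (x : F) {r : F} (hr : r ≠ 0) :
    trinomialMap l (x + r⁻¹) = trinomialMap l x ↔ (x ^ 2 ^ l + 1) * r ^ 2 ^ l + x * r = 1 := by
  unfold trinomialMap
  rw [pow_succ, pow_succ, add_pow_char_pow, inv_pow]
  field_simp
  constructor <;> intro h
  · linear_combination h - CharTwo.two_eq_zero (R := F)
  · linear_combination h + CharTwo.two_eq_zero (R := F)

theorem trinomialMap_eq_zero_iff (l : ℕ) (x : F) : trinomialMap l x = 0 ↔ x = 0 ∨ x = 1 := by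
  rw [trinomialMap, pow_succ, ← add_one_mul, mul_eq_zero, CharTwo.add_eq_zero,
    pow_char_pow_eq_one_iff, or_comm]

variable [Fintype F] [DecidableEq F]

theorem rootCount_zero (l : ℕ) : rootCount l (0 : F) = 2 := by
  have h : (univ.filter fun x : F => trinomialMap l x = 0) = {0, 1} := by
    ext x
    simp only [mem_filter, mem_univ, true_and, mem_insert, mem_singleton, trinomialMap_eq_zero_iff]
  rw [rootCount, h, card_pair zero_ne_one]

theorem rootCount_trinomialMap (l : ℕ) (x : F) :
    rootCount l (trinomialMap l x) = #{t | (x ^ 2 ^ l + 1) * t ^ 2 ^ l + x * t = 1} + 1 := by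
  have hx : x ∈ univ.filter fun y => trinomialMap l y = trinomialMap l x := by simp
  rw [rootCount, ← card_erase_add_one hx]
  congr 1
  apply card_nbij' (fun y => (y - x)⁻¹) (fun t => x + t⁻¹)
  · intro y hy
    simp only [mem_coe, mem_erase, mem_filter, mem_univ, true_and] at hy ⊢
    rw [← trinomialMap_add_inv_eq_iff l x (inv_ne_zero (sub_ne_zero.2 hy.1)), inv_inv,
      add_sub_cancel, hy.2]
  · intro t ht
    simp only [mem_coe, mem_erase, mem_filter, mem_univ, true_and] at ht ⊢
    have ht0 : t ≠ 0 := by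
      rintro rfl
      simp at ht
    exact ⟨by simpa using ht0, (trinomialMap_add_inv_eq_iff l x ht0).2 ht⟩
  · intro y _
    simp
  · intro t _
    simp

theorem rootCount_mem {k l : ℕ} (hF : Fintype.card F = 2 ^ k) (hgcd : Nat.gcd l k = 1) {a : F}
    (ha : a ≠ 0) : rootCount l a ∈ ({0, 1, 3} : Finset ℕ) := by
  by_cases hroot : ∃ x, trinomialMap l x = a
  swap
  · simp [rootCount, not_exists.mp hroot]
  obtain ⟨x, rfl⟩ := hroot
  obtain ⟨hx0, hx1⟩ : x ≠ 0 ∧ x ≠ 1 := by simpa [trinomialMap_eq_zero_iff] using ha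
  -- for `l = 0` the coprimality forces `F = 𝔽₂`, where `x ^ 2 + x` vanishes identically
  have hl : l ≠ 0 := by
    rintro rfl
    rw [Nat.gcd_zero_left] at hgcd
    subst hgcd
    have hx2 := FiniteField.pow_card x
    rw [hF, pow_one] at hx2
    exact ha (by simp [trinomialMap, hx2, CharTwo.add_self_eq_zero])
  have hinj : Function.Injective fun t : F => t ^ (2 ^ l - 1) := by
    refine FiniteField.pow_injective_of_coprime (Nat.sub_ne_zero_of_lt (Nat.one_lt_two_pow hl)) ?_
    rw [hF, Nat.Coprime, Nat.pow_sub_one_gcd_pow_sub_one, hgcd, pow_one]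
  have hc : x ^ 2 ^ l + 1 ≠ 0 := by
    rwa [Ne, CharTwo.add_eq_zero, pow_char_pow_eq_one_iff]
  rw [rootCount_trinomialMap]
  rcases card_filter_mul_pow_two_pow_add_mul_eq hl hinj hc hx0 1 with h | h <;> simp [h]

theorem card_offDiag_trinomialMap_eq {k : ℕ} (l : ℕ) (hF : Fintype.card F = 2 ^ k) (hk : Odd k) :
    #{p : F × F | trinomialMap l p.1 = trinomialMap l p.2 ∧ p.1 ≠ p.2} = Fintype.card F := by
  have hcollide : ∀ x r : F, r ≠ 0 →
      (trinomialMap l (x + r⁻¹) = trinomialMap l x ↔ r ^ 2 ^ l = (x * r) ^ 2 ^ l + x * r + 1) := by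
    intro x r hr
    rw [trinomialMap_add_inv_eq_iff l x hr, mul_pow]
    constructor <;> intro h
    · linear_combination h - (x * r + (x * r) ^ 2 ^ l) * CharTwo.two_eq_zero (R := F)
    · linear_combination h + (x * r + (x * r) ^ 2 ^ l) * CharTwo.two_eq_zero (R := F)
  have hfrob : Function.Injective fun x : F => x ^ 2 ^ l := iterateFrobenius_inj F 2 l
  have hsurj : ∀ u : F, ∃ r, r ^ 2 ^ l = u := Finite.injective_iff_surjective.1 hfrob
  choose root hroot using hsurj
  have hroot_ne_zero : ∀ u : F, root (u ^ 2 ^ l + u + 1) ≠ 0 := by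
    intro u h
    have := hroot (u ^ 2 ^ l + u + 1)
    rw [h, zero_pow (by positivity)] at this
    refine FiniteField.pow_prime_pow_ne_add_one hF (by simpa [← even_iff_two_dvd] using hk) l u ?_
    linear_combination -this - (u + 1) * CharTwo.two_eq_zero (R := F)
  rw [← card_univ]
  apply card_nbij' (fun p => p.1 / (p.2 - p.1))
    (fun u => (u / root (u ^ 2 ^ l + u + 1), (u + 1) / root (u ^ 2 ^ l + u + 1)))
  · intro _ _
    exact mem_coe.2 (mem_univ _)
  · intro u _
    have hρ0 := hroot_ne_zero u
    have hρ := hroot (u ^ 2 ^ l + u + 1)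
    simp only [mem_coe, mem_filter, mem_univ, true_and]
    generalize root (u ^ 2 ^ l + u + 1) = ρ at hρ0 hρ ⊢
    rw [add_div, one_div]
    refine ⟨((hcollide _ _ hρ0).2 ?_).symm, by simpa using hρ0⟩
    rw [div_mul_cancel₀ u hρ0, hρ]
  · rintro ⟨x, y⟩ hxy
    simp only [mem_coe, mem_filter, mem_univ, true_and] at hxy
    have hyx : y - x ≠ 0 := sub_ne_zero.2 hxy.2.symm
    have hrq := (hcollide x _ (inv_ne_zero hyx)).1 (by rw [inv_inv, add_sub_cancel, hxy.1])
    have hρ : root ((x / (y - x)) ^ 2 ^ l + x / (y - x) + 1) = (y - x)⁻¹ :=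
      hfrob (by simp only [hroot, hrq, div_eq_mul_inv])
    dsimp only
    rw [hρ]
    ext
    · field_simp
    · field_simp
      ring
  · intro u _
    have hρ0 := hroot_ne_zero u
    dsimp only
    field_simp
    ring

theorem sum_rootCount_sq {k : ℕ} (l : ℕ) (hF : Fintype.card F = 2 ^ k) (hk : Odd k) :
    ∑ a : F, rootCount l a ^ 2 = 2 * Fintype.card F := by
  have hdiag : #{p : F × F | trinomialMap l p.1 = trinomialMap l p.2 ∧ p.1 = p.2}
      = Fintype.card F := by
    have h : (univ.filter fun p : F × F => trinomialMap l p.1 = trinomialMap l p.2 ∧ p.1 = p.2)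
        = univ.diag := by
      ext ⟨x, y⟩
      simp only [mem_filter, mem_univ, true_and, mem_diag]
      exact ⟨And.right, fun h => ⟨h ▸ rfl, h⟩⟩
    rw [h, diag_card, card_univ]
  unfold rootCount
  rw [Fintype.sum_card_fiber_sq, ← card_filter_add_card_filter_not (fun p : F × F => p.1 = p.2),
    filter_filter, filter_filter, hdiag, card_offDiag_trinomialMap_eq l hF hk, two_mul]

end CharTwo

theorem stmt_2_general (k l : ℕ) (hk : Odd k) (hgcd : Nat.gcd l k = 1)
    (F : Type*) [Field F] [Fintype F] [DecidableEq F] (hF : Fintype.card F = 2 ^ k) :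
    ((Finset.univ.filter (fun a : F => a ≠ 0 ∧
        (Finset.univ.filter (fun x : F => x ^ (2 ^ l + 1) + x + a = 0)).card = 0)).card
        = (2 ^ k + 1) / 3) ∧
    ((Finset.univ.filter (fun a : F => a ≠ 0 ∧
        (Finset.univ.filter (fun x : F => x ^ (2 ^ l + 1) + x + a = 0)).card = 1)).card
        = 2 ^ (k - 1) - 1) ∧
    ((Finset.univ.filter (fun a : F => a ≠ 0 ∧
        (Finset.univ.filter (fun x : F => x ^ (2 ^ l + 1) + x + a = 0)).card = 3)).card
        = (2 ^ (k - 1) - 1) / 3) := by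
  have : CharP F 2 := charP_of_card_eq_prime_pow hF
  have hcount : ∀ i, #{a : F | a ≠ 0 ∧ #{x | x ^ (2 ^ l + 1) + x + a = 0} = i}
      = #{a ∈ univ.erase (0 : F) | rootCount l a = i} := by
    intro i
    simp only [CharTwo.add_eq_zero, ← filter_ne', filter_filter]
    rfl
  have hmem : ∀ a ∈ univ.erase (0 : F), rootCount l a ∈ ({0, 1, 3} : Finset ℕ) :=
    fun a ha => rootCount_mem hF hgcd (ne_of_mem_erase ha)
  have hcard := sum_comp_eq_sum_card_smul hmem fun _ => 1
  have hsum := sum_comp_eq_sum_card_smul hmem id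
  have hsq := sum_comp_eq_sum_card_smul hmem (· ^ 2)
  have htotal := sum_rootCount (F := F) l
  have htotal_sq := sum_rootCount_sq l hF hk
  rw [← add_sum_erase _ _ (mem_univ 0), rootCount_zero, hF] at htotal htotal_sq
  simp only [sum_const, card_erase_of_mem, mem_univ, card_univ, hF, smul_eq_mul, mul_one, id_eq,
    sum_insert, mem_insert, mem_singleton, sum_singleton, OfNat.zero_ne_ofNat, zero_ne_one,
    OfNat.one_ne_ofNat, or_self, not_false_eq_true] at hcard hsum hsq
  have hpow : 2 ^ k = 2 * 2 ^ (k - 1) := by rw [← pow_succ', Nat.sub_add_cancel hk.pos]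
  rw [hcount, hcount, hcount]
  omega

/-- distribution of the number of zeros of `P_a` for odd `k`, `gcd(l,k)=1`. -/
theorem stmt_2 (k l : ℕ) (hk : Odd k) (hlk : l < k) (hgcd : Nat.gcd l k = 1)
    (F : Type*) [Field F] [Fintype F] [DecidableEq F] (hF : Fintype.card F = 2 ^ k) :
    ((Finset.univ.filter (fun a : F => a ≠ 0 ∧
        (Finset.univ.filter (fun x : F => x ^ (2 ^ l + 1) + x + a = 0)).card = 0)).card
        = (2 ^ k + 1) / 3) ∧
    ((Finset.univ.filter (fun a : F => a ≠ 0 ∧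
        (Finset.univ.filter (fun x : F => x ^ (2 ^ l + 1) + x + a = 0)).card = 1)).card
        = 2 ^ (k - 1) - 1) ∧
    ((Finset.univ.filter (fun a : F => a ≠ 0 ∧
        (Finset.univ.filter (fun x : F => x ^ (2 ^ l + 1) + x + a = 0)).card = 3)).card
        = (2 ^ (k - 1) - 1) / 3) :=
  stmt_2_general k l hk hgcd F hF
end

section
/- Let l < k with gcd(l,k) = d, k = n d with n > 1, and define the sequence C_1(x)=1, C_2(x)=1, C_{i+2}(x) = C_{i+1}(x) + x^{2^{il}} C_i(x) over GF(2^k). Then for any u in GF(2^k) and 1 <= i <= n-1: C_i(u)^{2^l} C_{i+2}(u) + C_{i+1}(u)^{2^l+1} = prod_{j=1}^{i} u^{2^{jl}}. -/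
/-- The sequence `C_1 = C_2 = 1`, `C_{i+2}(x) = C_{i+1}(x) + x^(2^(i*l)) * C_i(x)`
(with `C_0 = 0`), evaluated at `u`. -/
def Cseq (l : ℕ) {F : Type*} [Field F] (u : F) : ℕ → F
  | 0 => 0
  | 1 => 1
  | 2 => 1
  | (i + 3) => Cseq l u (i + 2) + u ^ (2 ^ ((i + 1) * l)) * Cseq l u (i + 1)

/-- `Z_n(x) = C_{n+1}(x) + x * C_{n-1}(x)^(2^l)`, evaluated at `u`. -/
def Zseq (l n : ℕ) {F : Type*} [Field F] (u : F) : F :=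
  Cseq l u (n + 1) + u * (Cseq l u (n - 1)) ^ (2 ^ l)

/-! Write `q = 2^l` and `v_j = u^(2^(jl))`. In characteristic `2`, raising the recursion
`C_{i+2} = C_{i+1} + v_i C_i` to the Frobenius power `q` shifts `v_i` to `v_{i+1}`; substituting this
into the left-hand side `P_i` of the identity gives `P_{i+1} = v_{i+1} P_i`, and `P_0 = 1`. -/

theorem pow_two_pow_mul_pow_two_pow {M : Type*} [Monoid M] (u : M) (j l : ℕ) :
    (u ^ 2 ^ (j * l)) ^ 2 ^ l = u ^ 2 ^ ((j + 1) * l) := by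
  rw [← pow_mul, ← pow_add, add_one_mul]

section Cseq

variable {F : Type*} [Field F] (l : ℕ) (u : F)

theorem Cseq_add_two (i : ℕ) :
    Cseq l u (i + 2) = Cseq l u (i + 1) + u ^ 2 ^ (i * l) * Cseq l u i := by
  cases i with
  | zero => simp [Cseq]
  | succ i => rfl

variable [CharP F 2]

theorem Cseq_add_two_pow_two_pow (i : ℕ) :
    Cseq l u (i + 2) ^ 2 ^ l
      = Cseq l u (i + 1) ^ 2 ^ l + u ^ 2 ^ ((i + 1) * l) * Cseq l u i ^ 2 ^ l := by
  rw [Cseq_add_two, add_pow_char_pow, mul_pow, pow_two_pow_mul_pow_two_pow]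

theorem Cseq_pow_mul_add_pow_eq_prod (i : ℕ) :
    Cseq l u i ^ 2 ^ l * Cseq l u (i + 2) + Cseq l u (i + 1) ^ (2 ^ l + 1)
      = ∏ j ∈ Finset.Icc 1 i, u ^ 2 ^ (j * l) := by
  induction i with
  | zero => simp [Cseq]
  | succ i ih =>
    have htwo : (2 : F) = 0 := CharTwo.two_eq_zero
    rw [Finset.prod_Icc_succ_top (by omega), ← ih, Cseq_add_two l u (i + 1)]
    linear_combination Cseq l u (i + 2) * Cseq_add_two_pow_two_pow l u i
      + Cseq l u (i + 1) ^ 2 ^ l * Cseq l u (i + 2) * htwo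

end Cseq

theorem stmt_5_general (k l : ℕ)
    (F : Type*) [Field F] [Fintype F] (hF : Fintype.card F = 2 ^ k)
    (u : F) (i : ℕ) :
    (Cseq l u i) ^ (2 ^ l) * Cseq l u (i + 2) + (Cseq l u (i + 1)) ^ (2 ^ l + 1)
      = ∏ j ∈ Finset.Icc 1 i, u ^ (2 ^ (j * l)) := by
  have : CharP F 2 := charP_of_card_eq_prime_pow hF
  exact Cseq_pow_mul_add_pow_eq_prod l u i

/-- `C_i(u)^(2^l) * C_{i+2}(u) + C_{i+1}(u)^(2^l+1) = ∏_{j=1}^{i} u^(2^(jl))`. -/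
theorem stmt_5 (k l d n : ℕ) (hlk : l < k) (hd : Nat.gcd l k = d) (hk : k = n * d)
    (hn : 1 < n)
    (F : Type*) [Field F] [Fintype F] (hF : Fintype.card F = 2 ^ k)
    (u : F) (i : ℕ) (hi1 : 1 ≤ i) (hi2 : i ≤ n - 1) :
    (Cseq l u i) ^ (2 ^ l) * Cseq l u (i + 2) + (Cseq l u (i + 1)) ^ (2 ^ l + 1)
      = ∏ j ∈ Finset.Icc 1 i, u ^ (2 ^ (j * l)) :=
  stmt_5_general k l F hF u i
end

section
/- Let l < k with gcd(l,k) = d, k = n d, n > 1. For any a in GF(2^k)*, the polynomial P_a(x) = x^{2^l+1} + x + a has 0, 1, 2, or 2^d + 1 zeros in GF(2^k). -/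
/-!
Write `q = 2 ^ l`. If `x₁` is a root of `P_a`, the substitution `x = x₁ + 1 / w` maps the other
roots bijectively onto the solutions of the linearized equation `(x₁ ^ q + 1) w ^ q + x₁ w = 1`.
Its left side is additive in `w`, so the solution set is empty or a coset of the kernel. A nonzero
`w` lies in the kernel iff `w ^ (q - 1)` equals a fixed constant, so the nonzero part of the kernel
is empty or a coset of the `(q - 1)`-th roots of unity in the cyclic group `GF(2^k)*`, of which
there are `gcd (2 ^ l - 1) (2 ^ k - 1) = 2 ^ d - 1`. Hence `P_a` has `0`, `1`, `1 + 1` or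
`1 + 2 ^ d` roots.
-/

open Finset

theorem IsCyclic.card_pow_eq_one_eq_gcd {G : Type*} [Group G] [Fintype G] [DecidableEq G]
    [IsCyclic G] (e : ℕ) : #{g : G | g ^ e = 1} = Nat.gcd e (Fintype.card G) := by
  set m := Nat.gcd e (Fintype.card G)
  have hm : m ≠ 0 := (Nat.gcd_pos_of_pos_right _ Fintype.card_pos).ne'
  have hpow : ∀ g : G, g ^ e = 1 ↔ g ^ m = 1 := fun g =>
    ⟨fun h => pow_gcd_eq_one.2 ⟨h, pow_card_eq_one⟩, fun h => by
      obtain ⟨c, hc⟩ := Nat.gcd_dvd_left e (Fintype.card G)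
      rw [hc, pow_mul, h, one_pow]⟩
  simp_rw [hpow, ← sum_card_orderOf_eq_card_pow_eq_one hm]
  refine (sum_congr rfl fun d hd => IsCyclic.card_orderOf_eq_totient ?_).trans (Nat.sum_totient m)
  exact (Nat.dvd_of_mem_divisors hd).trans (Nat.gcd_dvd_right _ _)

section

variable {F : Type*} [Field F]

theorem add_pow_succ_add_add_eq_zero_iff (p : ℕ) [ExpChar F p] (l : ℕ) {a x₁ v : F}
    (hx₁ : x₁ ^ (p ^ l + 1) + x₁ + a = 0) (hv : v ≠ 0) :
    (x₁ + v) ^ (p ^ l + 1) + (x₁ + v) + a = 0 ↔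
      (x₁ ^ p ^ l + 1) * v⁻¹ ^ p ^ l + x₁ * v⁻¹ = -1 := by
  have key : (x₁ + v) ^ (p ^ l + 1) + (x₁ + v) + a = (x₁ ^ (p ^ l + 1) + x₁ + a) +
      v ^ (p ^ l + 1) * ((x₁ ^ p ^ l + 1) * v⁻¹ ^ p ^ l + x₁ * v⁻¹ + 1) := by
    rw [pow_succ, add_pow_expChar_pow, inv_pow]
    field_simp
    ring
  rw [key, hx₁, zero_add, mul_eq_zero, or_iff_right (pow_ne_zero _ hv), add_eq_zero_iff_eq_neg]

variable [Fintype F] [DecidableEq F]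

theorem FiniteField.card_units_pow_eq_eq_zero_or (e : ℕ) (b : F) :
    #{u : Fˣ | (u : F) ^ e = b} = 0 ∨
      #{u : Fˣ | (u : F) ^ e = b} = Nat.gcd e (Fintype.card F - 1) := by
  rcases eq_empty_or_nonempty ({u : Fˣ | (u : F) ^ e = b} : Finset Fˣ) with h | ⟨u₀, hu₀⟩
  · exact .inl (by rw [h, card_empty])
  right
  have hfiber : #{u : Fˣ | (u : F) ^ e = b} = #{u : Fˣ | powMonoidHom e u = u₀ ^ e} := by
    simp_rw [powMonoidHom_apply, Units.ext_iff, Units.val_pow_eq_pow_val, (mem_filter.1 hu₀).2]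
  rw [hfiber, MonoidHom.card_fiber_eq_of_mem_range (powMonoidHom e) (x := u₀ ^ e) (y := 1)
    ⟨u₀, rfl⟩ ⟨1, map_one _⟩, ← Fintype.card_units]
  exact IsCyclic.card_pow_eq_one_eq_gcd e

theorem card_filter_eq_card_units_add_one {P : F → Prop} [DecidablePred P] (h0 : P 0) :
    #{w : F | P w} = #{u : Fˣ | P u} + 1 := by
  rw [← card_erase_add_one (mem_filter.2 ⟨mem_univ 0, h0⟩)]
  congr 1
  symm
  refine card_bij (fun u _ => (u : F)) (fun u hu => ?_) (fun _ _ _ _ h => Units.val_injective h)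
    (fun w hw => ?_)
  · exact mem_erase.2 ⟨u.ne_zero, mem_filter.2 ⟨mem_univ _, (mem_filter.1 hu).2⟩⟩
  · obtain ⟨hw0, hw⟩ := mem_erase.1 hw
    exact ⟨Units.mk0 w hw0, mem_filter.2 ⟨mem_univ _, (mem_filter.1 hw).2⟩, rfl⟩

theorem card_mul_pow_add_mul_eq_zero_eq_one_or {m : ℕ} (hm : 0 < m) {c x : F}
    (hcx : c = 0 → x ≠ 0) :
    #{w : F | c * w ^ m + x * w = 0} = 1 ∨
      #{w : F | c * w ^ m + x * w = 0} = Nat.gcd (m - 1) (Fintype.card F - 1) + 1 := by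
  rw [card_filter_eq_card_units_add_one (by simp [hm.ne'])]
  by_cases hc : c = 0
  · left
    simp [hc, hcx hc]
  obtain ⟨m, rfl⟩ : ∃ m', m = m' + 1 := ⟨m - 1, by omega⟩
  have hroot : ∀ u : Fˣ, c * (u : F) ^ (m + 1) + x * u = 0 ↔ (u : F) ^ m = -x / c := by
    intro u
    rw [eq_div_iff hc, pow_succ, ← mul_assoc, ← add_mul, mul_eq_zero, or_iff_left u.ne_zero,
      mul_comm, add_eq_zero_iff_eq_neg]
  simp_rw [hroot, Nat.add_sub_cancel]
  rcases FiniteField.card_units_pow_eq_eq_zero_or m (-x / c) with h | h <;> simp [h]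

variable (p : ℕ) [ExpChar F p] (l : ℕ)

theorem card_linearized_fiber_eq_zero_or_eq_card_kernel (c x t : F) :
    #{w : F | c * w ^ p ^ l + x * w = t} = 0 ∨
      #{w : F | c * w ^ p ^ l + x * w = t} = #{w : F | c * w ^ p ^ l + x * w = 0} := by
  let f : F →+ F := AddMonoidHom.mk' (fun w => c * w ^ p ^ l + x * w) fun v w => by
    rw [add_pow_expChar_pow]; ring
  rcases eq_empty_or_nonempty ({w : F | f w = t} : Finset F) with h | ⟨w₀, hw₀⟩
  · exact .inl (by rw [← card_empty (α := F), ← h]; rfl)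
  · exact .inr (AddMonoidHom.card_fiber_eq_of_mem_range f ⟨w₀, (mem_filter.1 hw₀).2⟩
      ⟨0, map_zero f⟩)

theorem card_roots_eq_card_linearized_fiber_add_one {a x₁ : F}
    (hx₁ : x₁ ^ (p ^ l + 1) + x₁ + a = 0) :
    #{x : F | x ^ (p ^ l + 1) + x + a = 0} =
      #{w : F | (x₁ ^ p ^ l + 1) * w ^ p ^ l + x₁ * w = -1} + 1 := by
  have hmem : x₁ ∈ ({x : F | x ^ (p ^ l + 1) + x + a = 0} : Finset F) :=
    mem_filter.2 ⟨mem_univ _, hx₁⟩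
  rw [← card_erase_add_one hmem]
  congr 1
  refine card_nbij' (fun x => (x - x₁)⁻¹) (fun w => x₁ + w⁻¹) (fun x hx => ?_) (fun w hw => ?_)
    (fun x _ => by simp) (fun w _ => by simp)
  · obtain ⟨hne, hx⟩ := mem_erase.1 hx
    refine mem_filter.2 ⟨mem_univ _, ?_⟩
    rw [← add_pow_succ_add_add_eq_zero_iff p l hx₁ (sub_ne_zero.2 hne), add_sub_cancel]
    exact (mem_filter.1 hx).2
  · have hw : (x₁ ^ p ^ l + 1) * w ^ p ^ l + x₁ * w = -1 := (mem_filter.1 hw).2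
    have hw0 : w ≠ 0 := by
      rintro rfl
      simp [zero_pow (pow_ne_zero l (expChar_pos F p).ne')] at hw
    refine mem_erase.2 ⟨by simpa using hw0, mem_filter.2 ⟨mem_univ _, ?_⟩⟩
    rw [add_pow_succ_add_add_eq_zero_iff p l hx₁ (inv_ne_zero hw0), inv_inv]
    exact hw

end

theorem stmt_10_general (k l d : ℕ) (hd : Nat.gcd l k = d)
    (F : Type*) [Field F] [Fintype F] [DecidableEq F] (hF : Fintype.card F = 2 ^ k)
    (a : F) :
    (Finset.univ.filter (fun x : F => x ^ (2 ^ l + 1) + x + a = 0)).card ∈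
      ({0, 1, 2, 2 ^ d + 1} : Set ℕ) := by
  subst hd
  have : Fact (Nat.Prime 2) := ⟨Nat.prime_two⟩
  have : CharP F 2 := charP_of_card_eq_prime_pow hF
  rcases eq_empty_or_nonempty ({x : F | x ^ (2 ^ l + 1) + x + a = 0} : Finset F)
    with hroots | ⟨x₁, hx₁⟩
  · simp [hroots]
  rw [card_roots_eq_card_linearized_fiber_add_one 2 l (mem_filter.1 hx₁).2]
  rcases card_linearized_fiber_eq_zero_or_eq_card_kernel 2 l (x₁ ^ 2 ^ l + 1) x₁ (-1)
    with hfiber | hfiber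
  · simp [hfiber]
  have hx₁0 : x₁ ^ 2 ^ l + 1 = 0 → x₁ ≠ 0 := by
    rintro hc rfl
    simp at hc
  rcases card_mul_pow_add_mul_eq_zero_eq_one_or (Nat.two_pow_pos l) hx₁0 with hker | hker
  · simp [hfiber, hker]
  · rw [hF, Nat.pow_sub_one_gcd_pow_sub_one, Nat.sub_add_cancel Nat.one_le_two_pow] at hker
    simp [hfiber, hker]

/-- `P_a(x) = x^(2^l+1) + x + a` has `0`, `1`, `2` or `2^d+1`
zeros in `GF(2^k)`, where `d = gcd(l,k)`. -/
theorem stmt_10 (k l d n : ℕ) (hlk : l < k) (hd : Nat.gcd l k = d) (hk : k = n * d)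
    (hn : 1 < n)
    (F : Type*) [Field F] [Fintype F] [DecidableEq F] (hF : Fintype.card F = 2 ^ k)
    (a : F) (ha : a ≠ 0) :
    (Finset.univ.filter (fun x : F => x ^ (2 ^ l + 1) + x + a = 0)).card ∈
      ({0, 1, 2, 2 ^ d + 1} : Set ℕ) :=
  stmt_10_general k l d hd F hF a
end

section
/- Let l < k with gcd(l,k) = d, and let a in GF(2^k)* and c in GF(2^d). If u in GF(2^k) satisfies a^{2^l} u^{2^{2l}} + u^{2^l} + a u = 0 then Tr^k_d(u) = 0. Consequently, any two zeros v, v' in GF(2^k) of F_a(x) = a^{2^l} x^{2^{2l}} + x^{2^l} + a x + c satisfy Tr^k_d(v) = Tr^k_d(v'), and this common value lies in {0, c}. -/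
/-!
Write `T` for the relative trace and `q = 2^l`. Since `d ∣ l`, `T` is additive, commutes with
squaring, is `GF(2^d)`-linear, and satisfies `T(x^q) = T(x)`. Multiplying `F_a(u) = 0` by `u^q`
gives `s^q + s + (u^2)^q + c u^q = 0` with `s = a u^(q+1)`; applying `T` leaves
`T(u)^2 + c T(u) = 0`, so `T(u) ∈ {0, c}`, and `T(u) = 0` when `c = 0`. Two zeros of `F_a`
differ by a zero of the homogeneous part, so their traces agree.
-/

open Finset

/-- For `R = GF(p^(n d))` this is the relative trace `Tr^{nd}_d` to `GF(p^d)`. -/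
def frobTrace {R : Type*} [CommSemiring R] (p d n : ℕ) (x : R) : R :=
  ∑ i ∈ range n, x ^ p ^ (i * d)

theorem pow_pow_pow_eq_self {M : Type*} [Monoid M] {y : M} {m : ℕ} (h : y ^ m = y) (e : ℕ) :
    y ^ m ^ e = y := by
  induction e with
  | zero => simp
  | succ e ih => rw [pow_succ, pow_mul, ih, h]

namespace frobTrace

variable {R : Type*} [CommSemiring R] {p : ℕ} (d n : ℕ)

theorem mul_of_pow_eq_self {c : R} (hc : c ^ p ^ d = c) (x : R) :
    frobTrace p d n (c * x) = c * frobTrace p d n x := by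
  simp only [frobTrace, mul_sum, mul_pow]
  refine sum_congr rfl fun i _ => ?_
  rw [mul_comm i d, pow_mul, pow_pow_pow_eq_self hc]

variable [ExpChar R p]

theorem zero : frobTrace p d n (0 : R) = 0 := by
  simp [frobTrace, (expChar_pos R p).ne']

theorem add (x y : R) : frobTrace p d n (x + y) = frobTrace p d n x + frobTrace p d n y := by
  simp only [frobTrace, add_pow_expChar_pow, sum_add_distrib]

theorem pow_expChar_pow (x : R) (m : ℕ) :
    frobTrace p d n (x ^ p ^ m) = frobTrace p d n x ^ p ^ m := by
  simp only [frobTrace, sum_pow_char_pow, ← pow_mul, mul_comm]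

theorem pow_expChar (x : R) : frobTrace p d n (x ^ p) = frobTrace p d n x ^ p := by
  simpa using pow_expChar_pow d n x 1

theorem pow_expChar_pow_eq_self [IsRightCancelAdd R] {x : R} (hx : x ^ p ^ (n * d) = x) :
    frobTrace p d n x ^ p ^ d = frobTrace p d n x := by
  -- Raising to `p^d` shifts the summation index; the new last term `x^(p^(nd))` is the old first.
  have hshift := (sum_range_succ' (fun i => x ^ p ^ (i * d)) n).symm.trans
    (sum_range_succ (fun i => x ^ p ^ (i * d)) n)
  rw [zero_mul, pow_zero, pow_one, hx] at hshift
  rw [← pow_expChar_pow]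
  unfold frobTrace
  rw [← add_right_cancel hshift]
  refine sum_congr rfl fun i _ => ?_
  rw [← pow_mul, ← pow_add, add_one_mul, add_comm]

theorem pow_expChar_pow_eq_of_dvd [IsRightCancelAdd R] (hR : ∀ x : R, x ^ p ^ (n * d) = x) {l : ℕ} (hl : d ∣ l)
    (x : R) : frobTrace p d n (x ^ p ^ l) = frobTrace p d n x := by
  obtain ⟨e, rfl⟩ := hl
  rw [pow_expChar_pow, pow_mul, pow_pow_pow_eq_self (pow_expChar_pow_eq_self d n (hR x))]

end frobTrace

/-- `F_a(x) - c`, the homogeneous part of `F_a`. -/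
def linearizedF {R : Type*} [CommRing R] (a : R) (l : ℕ) (x : R) : R :=
  a ^ 2 ^ l * x ^ 2 ^ (2 * l) + x ^ 2 ^ l + a * x

section CharTwo

variable {R : Type*} [CommRing R] [CharP R 2]

theorem linearizedF_add (a : R) (l : ℕ) (x y : R) :
    linearizedF a l (x + y) = linearizedF a l x + linearizedF a l y := by
  simp only [linearizedF, add_pow_char_pow]
  ring

theorem frobTrace_mul_add_eq_zero_of_linearizedF_add_eq_zero {d n l : ℕ}
    (hR : ∀ x : R, x ^ 2 ^ (n * d) = x) (hl : d ∣ l) {a c u : R} (hc : c ^ 2 ^ d = c)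
    (hu : linearizedF a l u + c = 0) : frobTrace 2 d n u * (frobTrace 2 d n u + c) = 0 := by
  set s := a * u ^ (2 ^ l + 1)
  have hmul : s ^ 2 ^ l + (u ^ 2) ^ 2 ^ l + s + c * u ^ 2 ^ l = 0 := by
    rw [← mul_zero (u ^ 2 ^ l), ← hu, linearizedF, two_mul, pow_add]
    ring
  have htr := congrArg (frobTrace 2 d n) hmul
  simp only [frobTrace.add, frobTrace.mul_of_pow_eq_self d n hc,
    frobTrace.pow_expChar_pow_eq_of_dvd d n hR hl, frobTrace.pow_expChar, frobTrace.zero] at htr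
  linear_combination htr - frobTrace 2 d n s * CharTwo.two_eq_zero (R := R)

theorem frobTrace_eq_zero_or_eq_of_linearizedF_add_eq_zero [NoZeroDivisors R] {d n l : ℕ}
    (hR : ∀ x : R, x ^ 2 ^ (n * d) = x) (hl : d ∣ l) {a c u : R} (hc : c ^ 2 ^ d = c)
    (hu : linearizedF a l u + c = 0) : frobTrace 2 d n u = 0 ∨ frobTrace 2 d n u = c :=
  (mul_eq_zero.mp (frobTrace_mul_add_eq_zero_of_linearizedF_add_eq_zero hR hl hc hu)).imp_right
    CharTwo.add_eq_zero.mp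

end CharTwo

theorem stmt_15_general (k l d n : ℕ) (hd : Nat.gcd l k = d) (hk : k = n * d)
    (F : Type*) [Field F] [Fintype F] (hF : Fintype.card F = 2 ^ k)
    (a : F) (c : F) (hc : c ^ (2 ^ d) = c) :
    (∀ u : F, a ^ (2 ^ l) * u ^ (2 ^ (2 * l)) + u ^ (2 ^ l) + a * u = 0 →
      ∑ i ∈ Finset.range n, u ^ (2 ^ (i * d)) = 0) ∧
    (∀ v v' : F,
      a ^ (2 ^ l) * v ^ (2 ^ (2 * l)) + v ^ (2 ^ l) + a * v + c = 0 →
      a ^ (2 ^ l) * v' ^ (2 ^ (2 * l)) + v' ^ (2 ^ l) + a * v' + c = 0 →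
      (∑ i ∈ Finset.range n, v ^ (2 ^ (i * d)) = ∑ i ∈ Finset.range n, v' ^ (2 ^ (i * d))) ∧
      (∑ i ∈ Finset.range n, v ^ (2 ^ (i * d)) = 0 ∨
       ∑ i ∈ Finset.range n, v ^ (2 ^ (i * d)) = c)) := by
  have : CharP F 2 := charP_of_card_eq_prime_pow hF
  have hR : ∀ x : F, x ^ 2 ^ (n * d) = x := fun x => by rw [← hk, ← hF, FiniteField.pow_card]
  have hl : d ∣ l := hd ▸ Nat.gcd_dvd_left l k
  have trace_eq_zero (u : F) (hu : linearizedF a l u = 0) : frobTrace 2 d n u = 0 :=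
    (frobTrace_eq_zero_or_eq_of_linearizedF_add_eq_zero hR hl (zero_pow (by positivity))
      (by rwa [add_zero])).elim id id
  refine ⟨trace_eq_zero, fun v v' hv hv' => ⟨?_, ?_⟩⟩
  · have hsum : linearizedF a l (v + v') = 0 := by
      rw [linearizedF_add, linearizedF, linearizedF]
      linear_combination hv + hv' - CharTwo.add_self_eq_zero c
    have := trace_eq_zero _ hsum
    rwa [frobTrace.add, CharTwo.add_eq_zero] at this
  · exact frobTrace_eq_zero_or_eq_of_linearizedF_add_eq_zero hR hl hc hv

/-- any zero of the homogeneous part of `F_a` has relative trace `0`,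
hence all zeros of `F_a(x) = a^(2^l) x^(2^(2l)) + x^(2^l) + a x + c` have the same
relative trace to `GF(2^d)`, lying in `{0, c}`. -/
theorem stmt_15 (k l d n : ℕ) (hlk : l < k) (hd : Nat.gcd l k = d) (hk : k = n * d)
    (F : Type*) [Field F] [Fintype F] (hF : Fintype.card F = 2 ^ k)
    (a : F) (ha : a ≠ 0) (c : F) (hc : c ^ (2 ^ d) = c) :
    (∀ u : F, a ^ (2 ^ l) * u ^ (2 ^ (2 * l)) + u ^ (2 ^ l) + a * u = 0 →
      ∑ i ∈ Finset.range n, u ^ (2 ^ (i * d)) = 0) ∧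
    (∀ v v' : F,
      a ^ (2 ^ l) * v ^ (2 ^ (2 * l)) + v ^ (2 ^ l) + a * v + c = 0 →
      a ^ (2 ^ l) * v' ^ (2 ^ (2 * l)) + v' ^ (2 ^ l) + a * v' + c = 0 →
      (∑ i ∈ Finset.range n, v ^ (2 ^ (i * d)) = ∑ i ∈ Finset.range n, v' ^ (2 ^ (i * d))) ∧
      (∑ i ∈ Finset.range n, v ^ (2 ^ (i * d)) = 0 ∨
       ∑ i ∈ Finset.range n, v ^ (2 ^ (i * d)) = c)) :=
  stmt_15_general k l d n hd hk F hF a c hc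
end
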